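/- arXiv:2211.16000 — 5 statements merged into one kernel-verified Lean document; each statement's English description precedes it below -/
import Mathlib

section
/- Let i < j be nonnegative integers with j - i even and positive, and let σ > 0. Then the sum over k from i to j with k - i even of C(k,i)·C(j,k)·(k-i-1)!!·(j-k-1)!!·(-1)^{(j-k)/2}·σ^{j-i} equals zero. -/
open scoped Nat

lemma df_odd_mul (k : ℕ) : (2 * k)! = 2 ^ k * k ! * (2 * k - 1)‼ := by
  cases k with
  | zero => rfl
  | succ m =>
      have h1 : 2 * (m + 1) = (2 * m + 1) + 1 := by ring
      have h2 : 2 * (m + 1) - 1 = 2 * m + 1 := by omega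
      rw [h2, h1, Nat.factorial_eq_mul_doubleFactorial]
      have : (2 * m + 1 + 1)‼ = (2 * (m + 1))‼ := by rw [← h1]
      rw [this, Nat.doubleFactorial_two_mul]

lemma df_odd_real (k : ℕ) : ((2 * k - 1)‼ : ℝ) = (2 * k)! / (2 ^ k * k !) := by
  have h := df_odd_mul k
  have hne : (2 ^ k * (k ! : ℝ)) ≠ 0 := by positivity
  field_simp
  exact_mod_cast (by rw [h]; ring : (2 * k - 1)‼ * 2 ^ k * k ! = (2*k)!)

lemma sum_even_reindex (n : ℕ) (g : ℕ → ℝ) :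
    ∑ t ∈ Finset.range (2 * n + 1), (if Even t then g t else 0)
      = ∑ m ∈ Finset.range (n + 1), g (2 * m) := by
  induction n with
  | zero => simp
  | succ n ih =>
      have h : 2 * (n + 1) + 1 = (2 * n + 1) + 1 + 1 := by ring
      rw [h, Finset.sum_range_succ, Finset.sum_range_succ, ih, Finset.sum_range_succ]
      have h1 : ¬ Even (2 * n + 1) := by simp [Nat.even_add_one]
      have h2 : Even (2 * n + 1 + 1) := ⟨n + 1, by ring⟩
      rw [if_neg h1, if_pos h2, Finset.sum_range_succ (n := n + 1), Finset.sum_range_succ]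
      have e : 2 * (n + 1) = 2 * n + 1 + 1 := by ring
      rw [e]
      ring

lemma term_eq (i m d : ℕ) :
    ((i + 2 * m).choose i : ℝ) * ((i + 2 * m + 2 * d).choose (i + 2 * m) : ℝ) *
      ((2 * m - 1)‼ : ℝ) * ((2 * d - 1)‼ : ℝ)
    = ((i + 2 * m + 2 * d).choose i : ℝ) * ((2 * (m + d) - 1)‼ : ℝ) *
      ((m + d).choose m : ℝ) := by
  rw [Nat.cast_choose ℝ (by omega : i ≤ i + 2 * m),
      Nat.cast_choose ℝ (by omega : i + 2 * m ≤ i + 2 * m + 2 * d),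
      Nat.cast_choose ℝ (by omega : i ≤ i + 2 * m + 2 * d),
      Nat.cast_choose ℝ (by omega : m ≤ m + d),
      df_odd_real, df_odd_real, df_odd_real]
  have e1 : i + 2 * m - i = 2 * m := by omega
  have e2 : i + 2 * m + 2 * d - (i + 2 * m) = 2 * d := by omega
  have e3 : i + 2 * m + 2 * d - i = 2 * m + 2 * d := by omega
  have e4 : m + d - m = d := by omega
  have e5 : 2 * (m + d) = 2 * m + 2 * d := by ring
  rw [e1, e2, e3, e4, e5]
  have f1 : ((i : ℕ)! : ℝ) ≠ 0 := by positivity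
  have f2 : (((2 * m) : ℕ)! : ℝ) ≠ 0 := by positivity
  have f3 : (((2 * d) : ℕ)! : ℝ) ≠ 0 := by positivity
  have f4 : (((2 * m + 2 * d) : ℕ)! : ℝ) ≠ 0 := by positivity
  have f5 : ((m : ℕ)! : ℝ) ≠ 0 := by positivity
  have f6 : ((d : ℕ)! : ℝ) ≠ 0 := by positivity
  have f7 : ((2 : ℝ) ^ m) ≠ 0 := by positivity
  have f8 : ((2 : ℝ) ^ d) ≠ 0 := by positivity
  have f9 : ((2 : ℝ) ^ (m + d)) ≠ 0 := by positivity
  field_simp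
  ring

lemma alt_sum (n : ℕ) (hn : n ≠ 0) :
    ∑ m ∈ Finset.range (n + 1), (-1 : ℝ) ^ (n - m) * (n.choose m : ℝ) = 0 := by
  have key : ∑ m ∈ Finset.range (n + 1), (-1 : ℝ) ^ m * (n.choose m : ℝ) = 0 := by
    have := Int.alternating_sum_range_choose_of_ne hn
    exact_mod_cast congrArg (fun z : ℤ => (z : ℝ)) this
  calc ∑ m ∈ Finset.range (n + 1), (-1 : ℝ) ^ (n - m) * (n.choose m : ℝ)
      = ∑ m ∈ Finset.range (n + 1), (-1 : ℝ) ^ n * ((-1 : ℝ) ^ m * (n.choose m : ℝ)) := by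
        apply Finset.sum_congr rfl
        intro m hm
        have hmn : m ≤ n := by
          have := Finset.mem_range.mp hm; omega
        have hsq : (-1 : ℝ) ^ m * (-1 : ℝ) ^ m = 1 := by
          rw [← pow_add, Even.neg_one_pow ⟨m, rfl⟩]
        have hinv : ((-1 : ℝ) ^ m)⁻¹ = (-1 : ℝ) ^ m := inv_eq_of_mul_eq_one_right hsq
        have hpow : (-1 : ℝ) ^ (n - m) = (-1 : ℝ) ^ n * (-1 : ℝ) ^ m := by
          rw [pow_sub₀ _ (by norm_num) hmn, hinv]
        rw [hpow]; ring
    _ = (-1 : ℝ) ^ n * ∑ m ∈ Finset.range (n + 1), (-1 : ℝ) ^ m * (n.choose m : ℝ) := by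
        rw [Finset.mul_sum]
    _ = 0 := by rw [key, mul_zero]

theorem gaussian_moment_cancellation (i j : ℕ) (hij : i < j) (heven : Even (j - i))
    (σ : ℝ) (hσ : 0 < σ) :
    ∑ k ∈ Finset.Icc i j, (if Even (k - i) then
      ((k.choose i : ℝ) * (j.choose k : ℝ) * ((k - i - 1)‼ : ℝ) * ((j - k - 1)‼ : ℝ) *
        (-1 : ℝ) ^ ((j - k) / 2) * σ ^ (j - i)) else 0) = 0 := by
  obtain ⟨r, hr⟩ := heven
  have hn : j = i + 2 * r := by omega
  have hr0 : r ≠ 0 := by omega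
  subst hn
  rw [← Finset.Ico_add_one_right_eq_Icc, Finset.sum_Ico_eq_sum_range]
  have hc : i + 2 * r + 1 - i = 2 * r + 1 := by omega
  rw [hc]
  have step1 : ∀ t ∈ Finset.range (2 * r + 1),
      (if Even (i + t - i) then
        (((i + t).choose i : ℝ) * ((i + 2 * r).choose (i + t) : ℝ) * ((i + t - i - 1)‼ : ℝ) *
          ((i + 2 * r - (i + t) - 1)‼ : ℝ) * (-1 : ℝ) ^ ((i + 2 * r - (i + t)) / 2) *
          σ ^ (i + 2 * r - i)) else 0)
      = (if Even t then
        (((i + t).choose i : ℝ) * ((i + 2 * r).choose (i + t) : ℝ) * ((t - 1)‼ : ℝ) *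
          ((2 * r - t - 1)‼ : ℝ) * (-1 : ℝ) ^ ((2 * r - t) / 2) * σ ^ (2 * r)) else 0) := by
    intro t ht
    have e1 : i + t - i = t := by omega
    have e2 : i + 2 * r - (i + t) = 2 * r - t := by omega
    have e3 : i + 2 * r - i = 2 * r := by omega
    rw [e1, e2, e3]
  rw [Finset.sum_congr rfl step1]
  rw [sum_even_reindex r (fun t =>
      (((i + t).choose i : ℝ) * ((i + 2 * r).choose (i + t) : ℝ) * ((t - 1)‼ : ℝ) *
        ((2 * r - t - 1)‼ : ℝ) * (-1 : ℝ) ^ ((2 * r - t) / 2) * σ ^ (2 * r)))]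
  have step2 : ∀ m ∈ Finset.range (r + 1),
      (((i + 2 * m).choose i : ℝ) * ((i + 2 * r).choose (i + 2 * m) : ℝ) * ((2 * m - 1)‼ : ℝ) *
        ((2 * r - 2 * m - 1)‼ : ℝ) * (-1 : ℝ) ^ ((2 * r - 2 * m) / 2) * σ ^ (2 * r))
      = (((i + 2 * r).choose i : ℝ) * ((2 * r - 1)‼ : ℝ) * σ ^ (2 * r)) *
          ((-1 : ℝ) ^ (r - m) * (r.choose m : ℝ)) := by
    intro m hm
    have hmr : m ≤ r := by have := Finset.mem_range.mp hm; omega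
    set d := r - m with hd
    have hrd : r = m + d := by omega
    have e1 : i + 2 * r = i + 2 * m + 2 * d := by omega
    have e2 : 2 * r - 2 * m = 2 * d := by omega
    have e3 : 2 * r - 2 * m - 1 = 2 * d - 1 := by omega
    have e4 : (2 * d) / 2 = d := by omega
    rw [e1, e3, e2, e4]
    have := term_eq i m d
    rw [hrd]
    calc ((i + 2 * m).choose i : ℝ) * ((i + 2 * m + 2 * d).choose (i + 2 * m) : ℝ) *
          ((2 * m - 1)‼ : ℝ) * ((2 * d - 1)‼ : ℝ) * (-1 : ℝ) ^ d * σ ^ (2 * (m + d))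
        = (((i + 2 * m).choose i : ℝ) * ((i + 2 * m + 2 * d).choose (i + 2 * m) : ℝ) *
          ((2 * m - 1)‼ : ℝ) * ((2 * d - 1)‼ : ℝ)) * ((-1 : ℝ) ^ d * σ ^ (2 * (m + d))) := by
          ring
      _ = (((i + 2 * m + 2 * d).choose i : ℝ) * ((2 * (m + d) - 1)‼ : ℝ) *
            ((m + d).choose m : ℝ)) * ((-1 : ℝ) ^ d * σ ^ (2 * (m + d))) := by rw [this]
      _ = ((i + 2 * m + 2 * d).choose i : ℝ) * ((2 * (m + d) - 1)‼ : ℝ) * σ ^ (2 * (m + d)) *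
            ((-1 : ℝ) ^ d * ((m + d).choose m : ℝ)) := by ring
  rw [Finset.sum_congr rfl step2, ← Finset.mul_sum, alt_sum r hr0, mul_zero]
end

section
/- Let A^{(p)} = I + L^{(p)} be the (p+1)×(p+1) Gaussian moment matrix with entries A_{i,j} = C(j,i)·(j-i-1)!!·σ^{j-i} for j ≥ i with j-i even, and 0 otherwise (so L^{(p)} is the strictly upper-triangular part). Setting α = σ²·C(p,2), the induced 1-norm (maximum column sum) satisfies ‖A^{(p)}‖₁ ≤ e^α and ‖L^{(p)}‖₁ ≤ α·e^α. Moreover the induced ∞-norm satisfies the same bounds: ‖A^{(p)}‖_∞ ≤ ‖A^{(p)}‖₁ and ‖L^{(p)}‖_∞ ≤ ‖L^{(p)}‖₁. -/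
open scoped Nat

section GmmHelpers
open Finset

lemma gmm_fact_two_mul (m : ℕ) : (2*m)! = 2^m * m ! * (2*m-1)‼ := by
  cases m with
  | zero => rfl
  | succ s =>
    have h : 2*(s+1) = (2*s+1)+1 := by ring
    rw [h, Nat.factorial_eq_mul_doubleFactorial]
    have h2 : 2*s+1+1 = 2*(s+1) := by ring
    rw [h2, Nat.doubleFactorial_two_mul]
    have h3 : 2*(s+1)-1 = 2*s+1 := by omega
    rw [h3]

lemma gmm_desc_le (j m : ℕ) : j.descFactorial (2*m) ≤ (j*(j-1))^m := by
  induction m with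
  | zero => simp
  | succ s ih =>
    have h : 2*(s+1) = (2*s+1)+1 := by ring
    rw [h, Nat.descFactorial_succ, Nat.descFactorial_succ, pow_succ]
    calc (j - (2*s+1)) * ((j - 2*s) * j.descFactorial (2*s))
        ≤ (j-1) * (j * (j*(j-1))^s) := by
          apply Nat.mul_le_mul (by omega)
          exact Nat.mul_le_mul (by omega) ih
      _ = (j*(j-1))^s * (j*(j-1)) := by ring

lemma gmm_two_choose (j : ℕ) : 2 * j.choose 2 = j * (j-1) := by
  have h := Nat.descFactorial_eq_factorial_mul_choose j 2
  have h2 : j.descFactorial 2 = (j-1) * j := by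
    simp [Nat.descFactorial_succ]
  rw [h2] at h
  simp [Nat.factorial] at h
  rw [Nat.mul_comm (j-1) j] at h
  omega

lemma gmm_nat_key (j m : ℕ) : j.choose (2*m) * (2*m-1)‼ * m ! ≤ (j.choose 2)^m := by
  have hpos : 0 < (2:ℕ)^m := Nat.pow_pos (by norm_num)
  refine Nat.le_of_mul_le_mul_left ?_ hpos
  calc 2^m * (j.choose (2*m) * (2*m-1)‼ * m !)
      = j.choose (2*m) * (2^m * m ! * (2*m-1)‼) := by ring
    _ = j.choose (2*m) * (2*m)! := by rw [gmm_fact_two_mul]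
    _ = j.descFactorial (2*m) := by
        rw [Nat.descFactorial_eq_factorial_mul_choose]; ring
    _ ≤ (j*(j-1))^m := gmm_desc_le j m
    _ = (2 * j.choose 2)^m := by rw [gmm_two_choose]
    _ = 2^m * (j.choose 2)^m := by rw [mul_pow]

lemma gmm_real_key {σ : ℝ} (hσ : 0 ≤ σ) (j m : ℕ) :
    (j.choose (2*m) : ℝ) * (((2*m-1)‼ : ℕ) : ℝ) * σ^(2*m) ≤ ((j.choose 2 : ℝ) * σ^2)^m / m ! := by
  rw [mul_pow, ← pow_mul, mul_comm 2 m, div_eq_mul_inv, mul_comm m 2]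
  have h1 : (j.choose (2*m) : ℝ) * (((2*m-1)‼ : ℕ) : ℝ) ≤ (j.choose 2 : ℝ)^m / m ! := by
    rw [le_div_iff₀ (by positivity : (0:ℝ) < (m ! : ℝ))]
    have := gmm_nat_key j m
    calc (j.choose (2*m) : ℝ) * (((2*m-1)‼:ℕ) : ℝ) * (m ! : ℝ)
        = ((j.choose (2*m) * (2*m-1)‼ * m ! : ℕ) : ℝ) := by push_cast; ring
      _ ≤ (((j.choose 2)^m : ℕ) : ℝ) := by exact_mod_cast Nat.cast_le.mpr this
      _ = (j.choose 2 : ℝ)^m := by push_cast; ring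
  calc (j.choose (2*m) : ℝ) * (((2*m-1)‼:ℕ) : ℝ) * σ^(2*m)
      ≤ ((j.choose 2 : ℝ)^m / m !) * σ^(2*m) := by
        apply mul_le_mul_of_nonneg_right h1 (by positivity)
    _ = (j.choose 2 : ℝ)^m * σ^(2*m) * ((m ! : ℝ))⁻¹ := by ring

noncomputable def gmmTerm (σ : ℝ) (j k : ℕ) : ℝ :=
  if Even k then (j.choose k : ℝ) * (((k-1)‼ : ℕ) : ℝ) * σ^k else 0

lemma gmmTerm_nonneg {σ : ℝ} (hσ : 0 ≤ σ) (j k : ℕ) : 0 ≤ gmmTerm σ j k := by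
  unfold gmmTerm; split <;> positivity

lemma gmmTerm_zero (σ : ℝ) (j : ℕ) : gmmTerm σ j 0 = 1 := by
  simp [gmmTerm]

lemma gmm_sum_even (f : ℕ → ℝ) (n : ℕ) :
    ∑ k ∈ range (n+1), (if Even k then f k else 0) = ∑ m ∈ range (n/2+1), f (2*m) := by
  rw [← Finset.sum_filter]
  have hset : (range (n+1)).filter (fun k => Even k) = (range (n/2+1)).image (fun m => 2*m) := by
    ext k
    simp only [Finset.mem_filter, Finset.mem_range, Finset.mem_image, Nat.even_iff]
    constructor
    · rintro ⟨hk, he⟩; exact ⟨k/2, by omega, by omega⟩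
    · rintro ⟨m, hm, rfl⟩; omega
  rw [hset, Finset.sum_image (by intro a _ b _ h; simp only at h; omega)]

lemma gmm_sum_eq (σ : ℝ) (j n : ℕ) :
    ∑ k ∈ range (n+1), gmmTerm σ j k
      = ∑ m ∈ range (n/2+1), (j.choose (2*m) : ℝ) * (((2*m-1)‼ : ℕ) : ℝ) * σ^(2*m) := by
  unfold gmmTerm
  rw [gmm_sum_even]

lemma gmm_bound_main {σ : ℝ} (hσ : 0 ≤ σ) (j n : ℕ) :
    ∑ k ∈ range (n+1), gmmTerm σ j k ≤ Real.exp ((j.choose 2 : ℝ) * σ^2) ∧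
    ∑ k ∈ range (n+1), gmmTerm σ j k - 1 ≤ Real.exp ((j.choose 2 : ℝ) * σ^2) - 1 := by
  set x : ℝ := (j.choose 2 : ℝ) * σ^2 with hx
  have hx0 : 0 ≤ x := by positivity
  set N := n/2
  have hterm : ∀ m, (j.choose (2*m) : ℝ) * (((2*m-1)‼ : ℕ) : ℝ) * σ^(2*m) ≤ x^m / (Nat.factorial m : ℝ) :=
    fun m => gmm_real_key hσ j m
  have h0 : (j.choose (2*0) : ℝ) * (((2*0-1)‼ : ℕ) : ℝ) * σ^(2*0) = 1 := by norm_num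
  rw [gmm_sum_eq]
  constructor
  · calc ∑ m ∈ range (N+1), (j.choose (2*m) : ℝ) * (((2*m-1)‼ : ℕ) : ℝ) * σ^(2*m)
        ≤ ∑ m ∈ range (N+1), x^m / (Nat.factorial m : ℝ) := Finset.sum_le_sum fun m _ => hterm m
      _ ≤ Real.exp x := Real.sum_le_exp_of_nonneg hx0 (N+1)
  · rw [Finset.sum_range_succ' (fun m => (j.choose (2*m) : ℝ) * (((2*m-1)‼ : ℕ) : ℝ) * σ^(2*m)) N,
      h0]
    have h1 : ∑ m ∈ range N, x^(m+1) / (Nat.factorial (m+1) : ℝ) = ∑ m ∈ range (N+1), x^m / (Nat.factorial m : ℝ) - 1 := by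
      rw [Finset.sum_range_succ' (fun m => x^m / (Nat.factorial m : ℝ)) N]
      norm_num
    calc (∑ m ∈ range N, (j.choose (2*(m+1)) : ℝ) * (((2*(m+1)-1)‼ : ℕ) : ℝ) * σ^(2*(m+1))) + 1 - 1
        ≤ ∑ m ∈ range N, x^(m+1) / (Nat.factorial (m+1) : ℝ) := by
          rw [add_sub_cancel_right]
          exact Finset.sum_le_sum fun m _ => hterm (m+1)
      _ = ∑ m ∈ range (N+1), x^m / (Nat.factorial m : ℝ) - 1 := h1
      _ ≤ Real.exp x - 1 := by linarith [Real.sum_le_exp_of_nonneg hx0 (N+1)]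

lemma gmm_col (σ : ℝ) (p j : ℕ) (hj : j < p+1) :
    ∑ i ∈ range (p+1), (if i ≤ j ∧ Even (j - i) then
        (j.choose i : ℝ) * (((j - i - 1)‼ : ℕ) : ℝ) * σ ^ (j - i) else 0)
      = ∑ k ∈ range (j+1), gmmTerm σ j k := by
  rw [show ∑ i ∈ range (p+1), (if i ≤ j ∧ Even (j - i) then
        (j.choose i : ℝ) * (((j - i - 1)‼ : ℕ) : ℝ) * σ ^ (j - i) else 0)
      = ∑ i ∈ range (j+1), (if i ≤ j ∧ Even (j - i) then
        (j.choose i : ℝ) * (((j - i - 1)‼ : ℕ) : ℝ) * σ ^ (j - i) else 0) from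
    (Finset.sum_subset (Finset.range_subset_range.mpr (by omega))
      (fun x _ hx => by rw [if_neg]; simp only [Finset.mem_range] at hx; omega)).symm]
  rw [← Finset.sum_range_reflect]
  refine Finset.sum_congr rfl fun k hk => ?_
  simp only [Finset.mem_range] at hk
  have hk' : k ≤ j := by omega
  have e0 : j + 1 - 1 - k = j - k := by omega
  have e1 : j - (j - k) = k := by omega
  rw [e0, e1, Nat.choose_symm hk']
  simp [gmmTerm, Nat.sub_le]

lemma gmm_row {σ : ℝ} (hσ : 0 ≤ σ) (p i : ℕ) (hi : i < p+1) :
    ∑ j' ∈ range (p+1), (if i ≤ j' ∧ Even (j' - i) then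
        (j'.choose i : ℝ) * (((j' - i - 1)‼ : ℕ) : ℝ) * σ ^ (j' - i) else 0)
      ≤ ∑ k ∈ range (p+1), gmmTerm σ p k := by
  rw [show ∑ j' ∈ range (p+1), (if i ≤ j' ∧ Even (j' - i) then
        (j'.choose i : ℝ) * (((j' - i - 1)‼ : ℕ) : ℝ) * σ ^ (j' - i) else 0)
      = ∑ j' ∈ Finset.Ico i (p+1), (if i ≤ j' ∧ Even (j' - i) then
        (j'.choose i : ℝ) * (((j' - i - 1)‼ : ℕ) : ℝ) * σ ^ (j' - i) else 0) from
    (Finset.sum_subset (fun x hx => by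
        simp only [Finset.mem_Ico] at hx; simp only [Finset.mem_range]; omega)
      (fun x hx hxn => by
        rw [if_neg]
        simp only [Finset.mem_range] at hx; simp only [Finset.mem_Ico] at hxn; omega)).symm]
  rw [Finset.sum_Ico_eq_sum_range]
  calc ∑ k ∈ range (p+1-i), (if i ≤ i + k ∧ Even (i + k - i) then
          ((i+k).choose i : ℝ) * (((i + k - i - 1)‼ : ℕ) : ℝ) * σ ^ (i + k - i) else 0)
      ≤ ∑ k ∈ range (p+1-i), gmmTerm σ p k := by
        refine Finset.sum_le_sum fun k hk => ?_
        simp only [Finset.mem_range] at hk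
        have e1 : i + k - i = k := by omega
        rw [e1]
        by_cases he : Even k
        · rw [if_pos ⟨Nat.le_add_right i k, he⟩]
          unfold gmmTerm
          rw [if_pos he]
          refine mul_le_mul_of_nonneg_right (mul_le_mul_of_nonneg_right ?_ (by positivity))
            (by positivity)
          have h1 : (i+k).choose i = (i+k).choose k := Nat.choose_symm_add
          have h2 : (i+k).choose k ≤ p.choose k := Nat.choose_le_choose k (by omega)
          exact_mod_cast h1 ▸ h2
        · rw [if_neg (by tauto)]
          exact gmmTerm_nonneg hσ p k
    _ ≤ ∑ k ∈ range (p+1), gmmTerm σ p k :=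
        Finset.sum_le_sum_of_subset_of_nonneg (Finset.range_subset_range.mpr (by omega))
          (fun k _ _ => gmmTerm_nonneg hσ p k)

end GmmHelpers

theorem gaussian_moment_matrix_norm_bounds (p : ℕ) (hp : 2 ≤ p) (σ : ℝ) (hσ : 0 < σ)
    (A L : Matrix (Fin (p + 1)) (Fin (p + 1)) ℝ)
    (hA : ∀ i j : Fin (p + 1), A i j =
      if (i : ℕ) ≤ j ∧ Even ((j : ℕ) - i) then
        ((j : ℕ).choose i : ℝ) * (((j : ℕ) - i - 1)‼ : ℝ) * σ ^ ((j : ℕ) - i)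
      else 0)
    (hL : L = A - 1) (α : ℝ) (hα : α = σ ^ 2 * p.choose 2) :
    (Finset.univ.sup' Finset.univ_nonempty fun j : Fin (p + 1) => ∑ i, |A i j|)
        ≤ Real.exp α ∧
    (Finset.univ.sup' Finset.univ_nonempty fun j : Fin (p + 1) => ∑ i, |L i j|)
        ≤ α * Real.exp α ∧
    (Finset.univ.sup' Finset.univ_nonempty fun i : Fin (p + 1) => ∑ j, |A i j|)
        ≤ (Finset.univ.sup' Finset.univ_nonempty fun j : Fin (p + 1) => ∑ i, |A i j|) ∧
    (Finset.univ.sup' Finset.univ_nonempty fun i : Fin (p + 1) => ∑ j, |L i j|)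
        ≤ (Finset.univ.sup' Finset.univ_nonempty fun j : Fin (p + 1) => ∑ i, |L i j|) := by
  have hσ' : (0:ℝ) ≤ σ := hσ.le
  have hAnn : ∀ i j, 0 ≤ A i j := by
    intro i j; rw [hA]; split
    · positivity
    · exact le_refl 0
  have hAdiag : ∀ i, A i i = 1 := by
    intro i; rw [hA]; simp
  have hLentry : ∀ i j, |L i j| = A i j - (if i = j then 1 else 0) := by
    intro i j
    rw [hL]
    by_cases h : i = j
    · subst h
      simp [Matrix.sub_apply, Matrix.one_apply_eq, hAdiag]
    · rw [Matrix.sub_apply, Matrix.one_apply_ne h, if_neg h, sub_zero,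
        abs_of_nonneg (hAnn i j)]
  -- column sums of A
  have hcolA : ∀ j : Fin (p+1), (∑ i, |A i j|)
      = ∑ k ∈ Finset.range ((j:ℕ)+1), gmmTerm σ (j:ℕ) k := by
    intro j
    calc (∑ i, |A i j|)
        = ∑ i : Fin (p+1), (fun n : ℕ => if n ≤ (j:ℕ) ∧ Even ((j:ℕ) - n) then
            ((j:ℕ).choose n : ℝ) * ((((j:ℕ) - n - 1)‼ : ℕ) : ℝ) * σ ^ ((j:ℕ) - n) else 0)
            (i : ℕ) := by
          refine Finset.sum_congr rfl fun i _ => ?_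
          rw [abs_of_nonneg (hAnn i j), hA]
      _ = ∑ i ∈ Finset.range (p+1), (if i ≤ (j:ℕ) ∧ Even ((j:ℕ) - i) then
            ((j:ℕ).choose i : ℝ) * ((((j:ℕ) - i - 1)‼ : ℕ) : ℝ) * σ ^ ((j:ℕ) - i) else 0) := by
          exact Fin.sum_univ_eq_sum_range (fun n : ℕ => if n ≤ (j:ℕ) ∧ Even ((j:ℕ) - n) then
            ((j:ℕ).choose n : ℝ) * ((((j:ℕ) - n - 1)‼ : ℕ) : ℝ) * σ ^ ((j:ℕ) - n) else 0) (p+1)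
      _ = ∑ k ∈ Finset.range ((j:ℕ)+1), gmmTerm σ (j:ℕ) k := gmm_col σ p j j.isLt
  -- column sums of L
  have hcolL : ∀ j : Fin (p+1), (∑ i, |L i j|)
      = (∑ k ∈ Finset.range ((j:ℕ)+1), gmmTerm σ (j:ℕ) k) - 1 := by
    intro j
    calc (∑ i, |L i j|) = ∑ i, (A i j - if i = j then 1 else 0) :=
          Finset.sum_congr rfl fun i _ => hLentry i j
      _ = (∑ i, A i j) - ∑ i : Fin (p+1), (if i = j then (1:ℝ) else 0) :=
          Finset.sum_sub_distrib _ _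
      _ = (∑ i, |A i j|) - 1 := by
          rw [Finset.sum_ite_eq' Finset.univ j (fun _ => (1:ℝ)), if_pos (Finset.mem_univ j)]
          congr 1
          exact Finset.sum_congr rfl fun i _ => (abs_of_nonneg (hAnn i j)).symm
      _ = (∑ k ∈ Finset.range ((j:ℕ)+1), gmmTerm σ (j:ℕ) k) - 1 := by rw [hcolA j]
  -- row sums of A
  have hrowA : ∀ i : Fin (p+1), (∑ j', |A i j'|)
      ≤ ∑ k ∈ Finset.range (p+1), gmmTerm σ p k := by
    intro i
    have h1 : (∑ j', |A i j'|)
        = ∑ j' ∈ Finset.range (p+1), (if (i:ℕ) ≤ j' ∧ Even (j' - (i:ℕ)) then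
            (j'.choose (i:ℕ) : ℝ) * (((j' - (i:ℕ) - 1)‼ : ℕ) : ℝ) * σ ^ (j' - (i:ℕ)) else 0) := by
      calc (∑ j', |A i j'|)
          = ∑ j' : Fin (p+1), (fun n : ℕ => if (i:ℕ) ≤ n ∧ Even (n - (i:ℕ)) then
              (n.choose (i:ℕ) : ℝ) * (((n - (i:ℕ) - 1)‼ : ℕ) : ℝ) * σ ^ (n - (i:ℕ)) else 0)
              (j' : ℕ) := by
            refine Finset.sum_congr rfl fun j' _ => ?_
            rw [abs_of_nonneg (hAnn i j'), hA]
        _ = _ := by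
          exact Fin.sum_univ_eq_sum_range (fun n : ℕ => if (i:ℕ) ≤ n ∧ Even (n - (i:ℕ)) then
            (n.choose (i:ℕ) : ℝ) * (((n - (i:ℕ) - 1)‼ : ℕ) : ℝ) * σ ^ (n - (i:ℕ)) else 0) (p+1)
    rw [h1]
    exact gmm_row hσ' p (i:ℕ) i.isLt
  -- row sums of L
  have hrowL : ∀ i : Fin (p+1), (∑ j', |L i j'|)
      ≤ (∑ k ∈ Finset.range (p+1), gmmTerm σ p k) - 1 := by
    intro i
    have h2 : (∑ j', |L i j'|) = (∑ j', |A i j'|) - 1 := by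
      calc (∑ j', |L i j'|) = ∑ j', (A i j' - if i = j' then 1 else 0) :=
            Finset.sum_congr rfl fun j' _ => hLentry i j'
        _ = (∑ j', A i j') - ∑ j' : Fin (p+1), (if i = j' then (1:ℝ) else 0) :=
            Finset.sum_sub_distrib _ _
        _ = (∑ j', |A i j'|) - 1 := by
            rw [Finset.sum_ite_eq Finset.univ i (fun _ => (1:ℝ)), if_pos (Finset.mem_univ i)]
            congr 1
            exact Finset.sum_congr rfl fun j' _ => (abs_of_nonneg (hAnn i j')).symm
    rw [h2]
    linarith [hrowA i]
  -- basic facts about α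
  have hα0 : 0 ≤ α := by rw [hα]; positivity
  have hexp : ∀ j : Fin (p+1), Real.exp (((j:ℕ).choose 2 : ℝ) * σ^2) ≤ Real.exp α := by
    intro j
    rw [Real.exp_le_exp, hα, mul_comm]
    have : ((j:ℕ).choose 2 : ℝ) ≤ (p.choose 2 : ℝ) := by
      exact_mod_cast Nat.choose_le_choose 2 (by omega : (j:ℕ) ≤ p)
    nlinarith [sq_nonneg σ]
  have hkey : Real.exp α - 1 ≤ α * Real.exp α := by
    have h1 : Real.exp α * Real.exp (-α) = 1 := by rw [← Real.exp_add]; simp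
    nlinarith [Real.add_one_le_exp (-α), Real.exp_pos α]
  have hlastA : (∑ k ∈ Finset.range (p+1), gmmTerm σ p k) = ∑ i, |A i (Fin.last p)| := by
    simpa using (hcolA (Fin.last p)).symm
  have hlastL : (∑ k ∈ Finset.range (p+1), gmmTerm σ p k) - 1 = ∑ i, |L i (Fin.last p)| := by
    simpa using (hcolL (Fin.last p)).symm
  refine ⟨?_, ?_, ?_, ?_⟩
  · refine Finset.sup'_le _ _ fun j _ => ?_
    rw [hcolA j]
    have hb := (gmm_bound_main hσ' (j:ℕ) (j:ℕ)).1
    exact hb.trans (hexp j)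
  · refine Finset.sup'_le _ _ fun j _ => ?_
    rw [hcolL j]
    have hb := (gmm_bound_main hσ' (j:ℕ) (j:ℕ)).2
    have := hexp j
    linarith [hkey]
  · refine Finset.sup'_le _ _ fun i _ => ?_
    refine (hrowA i).trans ?_
    rw [hlastA]
    exact Finset.le_sup' (fun j : Fin (p+1) => ∑ i, |A i j|) (Finset.mem_univ (Fin.last p))
  · refine Finset.sup'_le _ _ fun i _ => ?_
    refine (hrowL i).trans ?_
    rw [hlastL]
    exact Finset.le_sup' (fun j : Fin (p+1) => ∑ i, |L i j|) (Finset.mem_univ (Fin.last p))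
end

section
/- For the Gaussian moment matrix column entries y_k = C(p, p-k)·(k-1)!!·σ^k with k even and 0 ≤ k ≤ p, and α = σ²·C(p,2), one has y_k ≤ α^{k/2}/((k/2)!), and consequently the sum ∑_{k even, 0 ≤ k ≤ p} y_k ≤ e^α. -/
open scoped Nat

lemma descFact_le (p m : ℕ) : p.descFactorial (2 * m) ≤ (p * (p - 1)) ^ m := by
  induction m with
  | zero => simp
  | succ m ih =>
    have h : 2 * (m + 1) = (2 * m + 1) + 1 := by ring
    rw [h, Nat.descFactorial_succ, Nat.descFactorial_succ, pow_succ]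
    have h1 : p - (2 * m + 1) ≤ p - 1 := Nat.sub_le_sub_left (by omega) p
    have h2 : p - 2 * m ≤ p := Nat.sub_le p _
    calc (p - (2 * m + 1)) * ((p - 2 * m) * p.descFactorial (2 * m))
        ≤ (p - 1) * (p * (p * (p - 1)) ^ m) := by
          exact Nat.mul_le_mul h1 (Nat.mul_le_mul h2 ih)
      _ = (p * (p - 1)) ^ m * (p * (p - 1)) := by ring

lemma two_mul_choose_two (p : ℕ) (hp : 1 ≤ p) : 2 * p.choose 2 = p * (p - 1) := by
  rw [Nat.choose_two_right]
  have h := Nat.even_mul_succ_self (p - 1)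
  have he : p - 1 + 1 = p := by omega
  rw [he, mul_comm] at h
  obtain ⟨c, hc⟩ := h
  rw [hc]; omega

lemma key_nat (p m : ℕ) (hp : 1 ≤ p) :
    p.choose (2 * m) * (2 * m - 1)‼ * m ! ≤ p.choose 2 ^ m := by
  have h2 : (p.choose (2 * m) * (2 * m - 1)‼ * m !) * 2 ^ m ≤ p.choose 2 ^ m * 2 ^ m := by
    have hfac : p.choose (2 * m) * (2 * m - 1)‼ * m ! * 2 ^ m
        = p.descFactorial (2 * m) := by
      rcases m with _ | m
      · simp
      · have h1 : (2 * (m + 1))! = (2 * (m + 1))‼ * (2 * (m + 1) - 1)‼ := by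
          have := Nat.factorial_eq_mul_doubleFactorial (2 * (m + 1) - 1)
          have he : 2 * (m + 1) - 1 + 1 = 2 * (m + 1) := by omega
          rwa [he] at this
        rw [Nat.descFactorial_eq_factorial_mul_choose, h1,
          Nat.doubleFactorial_two_mul]
        ring
    rw [hfac]
    calc p.descFactorial (2 * m) ≤ (p * (p - 1)) ^ m := descFact_le p m
      _ = (2 * p.choose 2) ^ m := by rw [two_mul_choose_two p hp]
      _ = p.choose 2 ^ m * 2 ^ m := by ring
  exact Nat.le_of_mul_le_mul_right h2 (pow_pos (by norm_num : (0:ℕ) < 2) m)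

theorem gaussian_moment_column_bound (p : ℕ) (hp : 2 ≤ p) (σ : ℝ) (hσ : 0 < σ)
    (α : ℝ) (hα : α = σ ^ 2 * p.choose 2)
    (y : ℕ → ℝ) (hy : ∀ k, y k = (p.choose (p - k) : ℝ) * ((k - 1)‼ : ℝ) * σ ^ k) :
    (∀ k ≤ p, Even k → y k ≤ α ^ (k / 2) / ((k / 2)! : ℝ)) ∧
    (∑ k ∈ (Finset.range (p + 1)).filter (fun k => Even k), y k) ≤ Real.exp α := by
  have hp1 : 1 ≤ p := by omega
  have hmain : ∀ m : ℕ, 2 * m ≤ p → y (2 * m) ≤ α ^ m / (m ! : ℝ) := by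
    intro m hm
    have hcast : ((p.choose (2 * m) * (2 * m - 1)‼ * m ! : ℕ) : ℝ)
        ≤ ((p.choose 2 ^ m : ℕ) : ℝ) := Nat.cast_le.mpr (key_nat p m hp1)
    push_cast at hcast
    have hsymm : p.choose (p - 2 * m) = p.choose (2 * m) := Nat.choose_symm hm
    rw [hy, hsymm, hα]
    rw [div_eq_mul_inv, mul_pow, ← pow_mul]
    have hmfpos : (0 : ℝ) < (m ! : ℝ) := by positivity
    have hσk : (0 : ℝ) ≤ σ ^ (2 * m) := by positivity
    have : (p.choose (2 * m) : ℝ) * ((2 * m - 1)‼ : ℝ) * σ ^ (2 * m) * (m ! : ℝ)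
        ≤ σ ^ (2 * m) * (p.choose 2 : ℝ) ^ m := by
      calc (p.choose (2 * m) : ℝ) * ((2 * m - 1)‼ : ℝ) * σ ^ (2 * m) * (m ! : ℝ)
          = ((p.choose (2 * m) : ℝ) * ((2 * m - 1)‼ : ℝ) * (m ! : ℝ)) * σ ^ (2 * m) := by
            ring
        _ ≤ (p.choose 2 : ℝ) ^ m * σ ^ (2 * m) := mul_le_mul_of_nonneg_right hcast hσk
        _ = σ ^ (2 * m) * (p.choose 2 : ℝ) ^ m := by ring
    calc (p.choose (2 * m) : ℝ) * ((2 * m - 1)‼ : ℝ) * σ ^ (2 * m)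
        = ((p.choose (2 * m) : ℝ) * ((2 * m - 1)‼ : ℝ) * σ ^ (2 * m) * (m ! : ℝ)) * (m ! : ℝ)⁻¹ := by
          field_simp
      _ ≤ (σ ^ (2 * m) * (p.choose 2 : ℝ) ^ m) * (m ! : ℝ)⁻¹ := by
          apply mul_le_mul_of_nonneg_right this (by positivity)
      _ = σ ^ (2 * m) * (p.choose 2 : ℝ) ^ m * (m ! : ℝ)⁻¹ := by ring
  constructor
  · intro k hk hke
    obtain ⟨m, hm⟩ := hke
    have hkm : k = 2 * m := by omega
    subst hkm
    have : 2 * m / 2 = m := by omega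
    rw [this]
    exact hmain m hk
  · have hset : (Finset.range (p + 1)).filter (fun k => Even k)
        = (Finset.range (p / 2 + 1)).image (fun m => 2 * m) := by
      ext k
      simp only [Finset.mem_filter, Finset.mem_range, Finset.mem_image]
      constructor
      · rintro ⟨hk, m, hm⟩
        exact ⟨m, by omega, by omega⟩
      · rintro ⟨m, hm, rfl⟩
        exact ⟨by omega, m, by omega⟩
    rw [hset, Finset.sum_image (by intro a _ b _ h; simp only at h; omega)]
    have hα0 : 0 ≤ α := by
      rw [hα]; positivity
    calc ∑ m ∈ Finset.range (p / 2 + 1), y (2 * m)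
        ≤ ∑ m ∈ Finset.range (p / 2 + 1), α ^ m / (m ! : ℝ) := by
          apply Finset.sum_le_sum
          intro m hm
          simp only [Finset.mem_range] at hm
          exact hmain m (by omega)
      _ ≤ Real.exp α := Real.sum_le_exp_of_nonneg hα0 _
end

section
/- Let g : [0,h] → ℝ be continuously differentiable with g' Hölder continuous of exponent γ ∈ (0,1] and constant L. Then the one-interval trapezoidal rule error satisfies |h·(g(0)+g(h))/2 - ∫₀^h g(x) dx| ≤ L·h^{2+γ} / (2(γ+1)(γ+2)). -/
open intervalIntegral MeasureTheory

theorem trapezoid_error_holder (h L γ : ℝ) (hh : 0 < h) (hγ : γ ∈ Set.Ioc (0 : ℝ) 1)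
    (hL : 0 ≤ L) (g g' : ℝ → ℝ)
    (hderiv : ∀ x ∈ Set.Icc 0 h, HasDerivAt g (g' x) x)
    (hhold : ∀ x ∈ Set.Icc 0 h, ∀ y ∈ Set.Icc 0 h, |g' x - g' y| ≤ L * |x - y| ^ γ) :
    |h * (g 0 + g h) / 2 - ∫ x in (0 : ℝ)..h, g x|
      ≤ L * h ^ (2 + γ) / (2 * (γ + 1) * (γ + 2)) := by
  obtain ⟨hγ0, hγ1⟩ := hγ
  set c : ℝ := h / 2 with hc
  have hc0 : 0 < c := by positivity
  have hch : c < h := by simp [hc]; linarith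
  have hIcc : Set.uIcc (0:ℝ) h = Set.Icc 0 h := Set.uIcc_of_le hh.le
  -- continuity of g'
  have hg'c : ContinuousOn g' (Set.Icc 0 h) := by
    intro x hx
    rw [Metric.continuousWithinAt_iff]
    intro ε hε
    refine ⟨(ε / (L + 1)) ^ γ⁻¹, by positivity, fun y hy hd => ?_⟩
    have h1 : |g' y - g' x| ≤ L * |y - x| ^ γ := hhold y hy x hx
    have h2 : |y - x| ^ γ < ((ε / (L + 1)) ^ γ⁻¹) ^ γ := by
      apply Real.rpow_lt_rpow (abs_nonneg _) _ hγ0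
      simpa [Real.dist_eq] using hd
    have h3 : ((ε / (L + 1)) ^ γ⁻¹ : ℝ) ^ γ = ε / (L + 1) :=
      Real.rpow_inv_rpow (by positivity) (ne_of_gt hγ0)
    rw [Real.dist_eq]
    calc |g' y - g' x| ≤ L * |y - x| ^ γ := h1
      _ < (L + 1) * (ε / (L + 1)) := by
          rw [h3] at h2
          have hb : 0 ≤ |y - x| ^ γ := Real.rpow_nonneg (abs_nonneg _) _
          nlinarith [mul_le_mul_of_nonneg_right (le_refl L) hb]
      _ = ε := by field_simp
  have hgc : ContinuousOn g (Set.Icc 0 h) := fun x hx =>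
    (hderiv x hx).continuousAt.continuousWithinAt
  -- integrability
  have hint_g : IntervalIntegrable g volume 0 h :=
    (hgc.mono (by rw [hIcc])).intervalIntegrable
  have hint_g' : IntervalIntegrable g' volume 0 h :=
    (hg'c.mono (by rw [hIcc])).intervalIntegrable
  have hcontF : ContinuousOn (fun t => (t - c) * g' t) (Set.Icc 0 h) :=
    (continuousOn_id.sub continuousOn_const).mul hg'c
  have hintF : IntervalIntegrable (fun t => (t - c) * g' t) volume 0 h :=
    (hcontF.mono (by rw [hIcc])).intervalIntegrable
  -- integration by parts
  have hparts : ∫ t in (0:ℝ)..h, (t - c) * g' t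
      = h * (g 0 + g h) / 2 - ∫ x in (0:ℝ)..h, g x := by
    have := integral_mul_deriv_eq_deriv_mul (u := fun t => t - c) (u' := fun _ => (1:ℝ))
      (v := g) (v' := g') (a := 0) (b := h)
      (fun x _ => (hasDerivAt_id x).sub_const c)
      (fun x hx => hderiv x (hIcc ▸ hx))
      intervalIntegrable_const hint_g'
    rw [this]
    have : ∫ x in (0:ℝ)..h, (1:ℝ) * g x = ∫ x in (0:ℝ)..h, g x := by
      simp
    rw [this]
    ring
  -- reflection identity
  have hsplit : ∫ t in (0:ℝ)..h, (t - c) * g' t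
      = (∫ t in (0:ℝ)..c, (t - c) * g' t) + ∫ t in c..h, (t - c) * g' t := by
    rw [intervalIntegral.integral_add_adjacent_intervals]
    · exact hintF.mono_set (by rw [hIcc, Set.uIcc_of_le hc0.le]; exact Set.Icc_subset_Icc le_rfl hch.le)
    · exact hintF.mono_set (by rw [hIcc, Set.uIcc_of_le hch.le]; exact Set.Icc_subset_Icc hc0.le le_rfl)
  have hrefl : ∫ t in (0:ℝ)..c, (t - c) * g' t
      = ∫ s in c..h, ((h - s) - c) * g' (h - s) := by
    have := integral_comp_sub_left (a := c) (b := h) (fun t => (t - c) * g' t) h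
    rw [this]
    norm_num [hc, show h - h/2 = h/2 from by ring]
  have hE : ∫ t in (0:ℝ)..h, (t - c) * g' t
      = ∫ s in c..h, (s - c) * (g' s - g' (h - s)) := by
    rw [hsplit, hrefl, ← intervalIntegral.integral_add]
    · apply intervalIntegral.integral_congr
      intro s _
      ring
    · -- integrability of ((h-s)-c) * g'(h-s) on c..h
      apply ContinuousOn.intervalIntegrable
      rw [Set.uIcc_of_le hch.le]
      apply ContinuousOn.mul ((continuousOn_const.sub continuousOn_id).sub continuousOn_const)
      apply hg'c.comp (continuousOn_const.sub continuousOn_id)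
      intro s hs
      simp only [Pi.sub_apply, id_eq]
      exact ⟨by linarith [hs.2], by linarith [hs.1, hc0]⟩
    · exact hintF.mono_set (by rw [hIcc, Set.uIcc_of_le hch.le]; exact Set.Icc_subset_Icc hc0.le le_rfl)
  -- the bounding function
  set B : ℝ → ℝ := fun s => L * ((s - c) * (2 * (s - c)) ^ γ) with hB
  have hcontB : ContinuousOn B (Set.Icc c h) := by
    apply continuousOn_const.mul
    apply ContinuousOn.mul (continuousOn_id.sub continuousOn_const)
    intro x hx
    exact ((Real.continuousAt_rpow_const _ γ (Or.inr hγ0.le)).comp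
      (by fun_prop : Continuous (fun s : ℝ => 2 * (s - c))).continuousAt).continuousWithinAt
  have hintB : IntervalIntegrable B volume c h :=
    (hcontB.mono (by rw [Set.uIcc_of_le hch.le])).intervalIntegrable
  -- pointwise bound
  have hbound : ∀ s ∈ Set.Icc c h, |(s - c) * (g' s - g' (h - s))| ≤ B s := by
    intro s hs
    have hs1 : s ∈ Set.Icc (0:ℝ) h := ⟨le_trans hc0.le hs.1, hs.2⟩
    have hs2 : h - s ∈ Set.Icc (0:ℝ) h := ⟨by linarith [hs.2], by linarith [hs.1, hc0]⟩
    have hsc : 0 ≤ s - c := by linarith [hs.1]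
    rw [abs_mul, abs_of_nonneg hsc]
    have h1 : |g' s - g' (h - s)| ≤ L * |s - (h - s)| ^ γ := hhold s hs1 (h - s) hs2
    have h2 : |s - (h - s)| = 2 * (s - c) := by
      rw [abs_of_nonneg (by linarith [hs.1]; )]
      simp [hc]; ring
    rw [h2] at h1
    calc (s - c) * |g' s - g' (h - s)| ≤ (s - c) * (L * (2 * (s - c)) ^ γ) :=
          mul_le_mul_of_nonneg_left h1 hsc
      _ = B s := by rw [hB]; ring
  -- integral of the bound
  have hBval : ∫ s in c..h, B s = L * 2 ^ γ * (c ^ (2 + γ) / (2 + γ)) := by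
    have e1 : ∫ s in c..h, B s = L * 2 ^ γ * ∫ s in c..h, (s - c) ^ (1 + γ) := by
      rw [← intervalIntegral.integral_const_mul]
      apply intervalIntegral.integral_congr
      intro s hs
      rw [Set.uIcc_of_le hch.le] at hs
      have hsc : 0 ≤ s - c := by linarith [hs.1]
      rw [hB]
      simp only
      rw [Real.mul_rpow (by norm_num) hsc, Real.rpow_add' hsc (by positivity), Real.rpow_one]
      ring
    rw [e1]
    have e2 : ∫ s in c..h, (s - c) ^ (1 + γ) = ∫ u in (0:ℝ)..c, u ^ (1 + γ) := by
      have := integral_comp_sub_right (a := c) (b := h) (fun u => u ^ (1 + γ)) c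
      rw [this]
      norm_num [hc, show h - h/2 = h/2 from by ring]
    rw [e2, integral_rpow (Or.inl (by linarith : (-1:ℝ) < 1 + γ))]
    rw [show (1:ℝ) + γ + 1 = 2 + γ by ring, Real.zero_rpow (by positivity)]
    ring
  -- put together
  rw [← hparts, hE]
  have habs : |∫ s in c..h, (s - c) * (g' s - g' (h - s))|
      ≤ |∫ s in c..h, B s| := by
    have := intervalIntegral.norm_integral_le_abs_of_norm_le
      (f := fun s => (s - c) * (g' s - g' (h - s))) (g := B) (μ := volume) (a := c) (b := h)
      ?_ hintB
    · simpa using this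
    · rw [Set.uIoc_of_le hch.le]
      filter_upwards [ae_restrict_mem measurableSet_Ioc] with s hs
      simp only [Real.norm_eq_abs]
      exact hbound s ⟨hs.1.le, hs.2⟩
  refine habs.trans ?_
  rw [hBval]
  have hcval : c ^ (2 + γ) = h ^ (2 + γ) / 2 ^ (2 + γ) := by
    rw [hc, Real.div_rpow hh.le (by norm_num)]
  have h4 : (2:ℝ) ^ (2 + γ) = 4 * 2 ^ γ := by
    rw [Real.rpow_add (by norm_num : (0:ℝ) < 2)]
    rw [show (2:ℝ) = ((2:ℕ):ℝ) from by norm_num]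
    rw [Real.rpow_natCast]
    norm_num
  have hval : L * 2 ^ γ * (c ^ (2 + γ) / (2 + γ)) = L * h ^ (2 + γ) / (4 * (2 + γ)) := by
    rw [hcval, h4]
    have h2γ : (0:ℝ) < 2 ^ γ := Real.rpow_pos_of_pos (by norm_num) γ
    field_simp
  have hpos : 0 ≤ L * 2 ^ γ * (c ^ (2 + γ) / (2 + γ)) := by positivity
  rw [abs_of_nonneg hpos, hval]
  exact div_le_div_of_nonneg_left (by positivity) (by nlinarith) (by nlinarith)
end

section
/- Let A ∈ ℝ^{m×n} have full column rank n, let x ∈ ℝ^n with x ≠ 0, and set y = Ax. Suppose a perturbed system (A', y') satisfies ‖A - A'‖_max < ε entrywise and ‖y - y'‖_∞ < ε, where A' also has rank n and ε ≤ σ_n(A)/√(2mn), with σ_n(A) the smallest singular value of A. Then the perturbed least-squares solution x' = (A'ᵀA')^{-1}A'ᵀ y' satisfies ‖x - x'‖₂ ≤ ((√(2m) + √(2mn)·‖x‖₂) / (σ_n(A)·(√2 - 1)))·ε. -/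
section LSPHelpers

lemma LSP.eucl_norm_eq {k : ℕ} (v : Fin k → ℝ) :
    ‖(WithLp.equiv 2 (Fin k → ℝ)).symm v‖ = Real.sqrt (∑ j, v j ^ 2) := by
  rw [EuclideanSpace.norm_eq]
  congr 1
  exact Finset.sum_congr rfl fun j _ => by
    rw [WithLp.equiv_symm_apply, PiLp.toLp_apply, Real.norm_eq_abs, sq_abs]

lemma LSP.sqrt_triangle {k : ℕ} (u v : Fin k → ℝ) :
    Real.sqrt (∑ j, (u j + v j) ^ 2) ≤
      Real.sqrt (∑ j, u j ^ 2) + Real.sqrt (∑ j, v j ^ 2) := by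
  have := norm_add_le ((WithLp.equiv 2 (Fin k → ℝ)).symm u) ((WithLp.equiv 2 (Fin k → ℝ)).symm v)
  rwa [show (WithLp.equiv 2 (Fin k → ℝ)).symm u + (WithLp.equiv 2 (Fin k → ℝ)).symm v = (WithLp.equiv 2 (Fin k → ℝ)).symm (u + v) from rfl, LSP.eucl_norm_eq, LSP.eucl_norm_eq, LSP.eucl_norm_eq] at this

lemma LSP.sqrt_cs {k : ℕ} (u v : Fin k → ℝ) :
    (∑ j, u j * v j) ≤ Real.sqrt (∑ j, u j ^ 2) * Real.sqrt (∑ j, v j ^ 2) := by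
  have := real_inner_le_norm ((WithLp.equiv 2 (Fin k → ℝ)).symm u)
    ((WithLp.equiv 2 (Fin k → ℝ)).symm v)
  rw [LSP.eucl_norm_eq, LSP.eucl_norm_eq] at this
  refine le_trans (le_of_eq ?_) this
  rw [PiLp.inner_apply]
  exact Finset.sum_congr rfl fun j _ => by
    rw [WithLp.equiv_symm_apply, PiLp.toLp_apply, PiLp.toLp_apply, RCLike.inner_apply,
      starRingEnd_apply, star_trivial, mul_comm]

lemma LSP.sqrt_comp_bound {k : ℕ} (u : Fin k → ℝ) (c : ℝ) (hc : 0 ≤ c)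
    (h : ∀ i, |u i| ≤ c) :
    Real.sqrt (∑ i, u i ^ 2) ≤ Real.sqrt k * c := by
  have h1 : (∑ i, u i ^ 2) ≤ (k : ℝ) * c ^ 2 := by
    calc (∑ i, u i ^ 2) ≤ ∑ _i : Fin k, c ^ 2 := by
          refine Finset.sum_le_sum fun i _ => ?_
          rw [← sq_abs]
          exact pow_le_pow_left₀ (abs_nonneg _) (h i) 2
      _ = (k : ℝ) * c ^ 2 := by simp [Finset.sum_const, mul_comm]
  calc Real.sqrt (∑ i, u i ^ 2) ≤ Real.sqrt ((k : ℝ) * c ^ 2) := Real.sqrt_le_sqrt h1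
    _ = Real.sqrt k * c := by
        rw [Real.sqrt_mul (Nat.cast_nonneg k), Real.sqrt_sq hc]

lemma LSP.sum_abs_le {k : ℕ} (v : Fin k → ℝ) :
    (∑ j, |v j|) ≤ Real.sqrt k * Real.sqrt (∑ j, v j ^ 2) := by
  have h := LSP.sqrt_cs (fun _ : Fin k => (1:ℝ)) (fun j => |v j|)
  simp only [one_mul, one_pow, sq_abs] at h
  calc (∑ j, |v j|) ≤ Real.sqrt (∑ _j : Fin k, (1:ℝ)) * Real.sqrt (∑ j, v j ^ 2) := h
    _ = Real.sqrt k * Real.sqrt (∑ j, v j ^ 2) := by simp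

/-- entrywise-small matrix has small `mulVec` components -/
lemma LSP.mulVec_comp_bound {m n : ℕ} (B : Matrix (Fin m) (Fin n) ℝ) (ε : ℝ) (hε0 : 0 ≤ ε)
    (hB : ∀ i j, |B i j| ≤ ε) (v : Fin n → ℝ) (i : Fin m) :
    |B.mulVec v i| ≤ ε * (Real.sqrt n * Real.sqrt (∑ j, v j ^ 2)) := by
  calc |B.mulVec v i| = |∑ j, B i j * v j| := by rw [Matrix.mulVec, dotProduct]
    _ ≤ ∑ j, |B i j * v j| := Finset.abs_sum_le_sum_abs _ _
    _ ≤ ∑ j, ε * |v j| := by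
        refine Finset.sum_le_sum fun j _ => ?_
        rw [abs_mul]
        exact mul_le_mul_of_nonneg_right (hB i j) (abs_nonneg _)
    _ = ε * ∑ j, |v j| := by rw [Finset.mul_sum]
    _ ≤ ε * (Real.sqrt n * Real.sqrt (∑ j, v j ^ 2)) :=
        mul_le_mul_of_nonneg_left (LSP.sum_abs_le v) hε0

end LSPHelpers

theorem least_squares_perturbation (m n : ℕ) (hn : 1 ≤ n)
    (A A' : Matrix (Fin m) (Fin n) ℝ) (x : Fin n → ℝ) (hx : x ≠ 0)
    (y y' : Fin m → ℝ) (hy : y = A.mulVec x)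
    (hrankA : A.rank = n) (hrankA' : A'.rank = n)
    (σn : ℝ)
    (hσn : σn = sInf {r : ℝ | ∃ v : Fin n → ℝ, (∑ j, v j ^ 2) = 1 ∧
      r = Real.sqrt (∑ i, (A.mulVec v i) ^ 2)})
    (ε : ℝ) (hε1 : ∀ i j, |A i j - A' i j| < ε) (hε2 : ∀ i, |y i - y' i| < ε)
    (hε3 : ε ≤ σn / Real.sqrt (2 * m * n))
    (x' : Fin n → ℝ) (hx' : x' = ((A'.transpose * A')⁻¹ * A'.transpose).mulVec y') :
    Real.sqrt (∑ j, (x j - x' j) ^ 2) ≤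
      ((Real.sqrt (2 * m) + Real.sqrt (2 * m * n) * Real.sqrt (∑ j, x j ^ 2)) /
        (σn * (Real.sqrt 2 - 1))) * ε := by
  -- basic positivity facts
  have hm : 1 ≤ m := le_trans hn (hrankA ▸ A.rank_le_height)
  have hεpos : 0 < ε := lt_of_le_of_lt (abs_nonneg _) (hε2 ⟨0, hm⟩)
  have hmR : (0:ℝ) < m := by exact_mod_cast hm
  have hnR : (0:ℝ) < n := by exact_mod_cast hn
  have h2mn : (0:ℝ) < Real.sqrt (2 * m * n) := Real.sqrt_pos.mpr (by positivity)
  have hσpos : 0 < σn := lt_of_lt_of_le (by positivity) ((le_div_iff₀ h2mn).mp hε3)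
  have hsmpos : (0:ℝ) < Real.sqrt m := Real.sqrt_pos.mpr hmR
  have hsnpos : (0:ℝ) < Real.sqrt n := Real.sqrt_pos.mpr hnR
  have hs2pos : (0:ℝ) < Real.sqrt 2 := by positivity
  have hs2sq : Real.sqrt 2 * Real.sqrt 2 = 2 := Real.mul_self_sqrt (by norm_num)
  have hs2gt : (1:ℝ) < Real.sqrt 2 := by
    rw [show (1:ℝ) = Real.sqrt 1 by simp]
    exact Real.sqrt_lt_sqrt (by norm_num) (by norm_num)
  -- sqrt factorizations
  have e2m : Real.sqrt (2 * m) = Real.sqrt 2 * Real.sqrt m := Real.sqrt_mul (by norm_num) _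
  have e2mn : Real.sqrt (2 * m * n) = Real.sqrt 2 * Real.sqrt m * Real.sqrt n := by
    rw [Real.sqrt_mul (by positivity), e2m]
  -- smallest singular value lower bound
  have hσ_lb : ∀ v : Fin n → ℝ,
      σn * Real.sqrt (∑ j, v j ^ 2) ≤ Real.sqrt (∑ i, (A.mulVec v i) ^ 2) := by
    intro v
    rcases eq_or_lt_of_le (Finset.sum_nonneg fun j _ => sq_nonneg (v j)) with h0 | hpos2
    · rw [← h0, Real.sqrt_zero, mul_zero]
      exact Real.sqrt_nonneg _
    set c := Real.sqrt (∑ j, v j ^ 2) with hc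
    have hcpos : 0 < c := Real.sqrt_pos.mpr hpos2
    have hcsq : c ^ 2 = ∑ j, v j ^ 2 := Real.sq_sqrt (le_of_lt hpos2)
    have hmem : Real.sqrt (∑ i, (A.mulVec (c⁻¹ • v) i) ^ 2) ∈ {r : ℝ | ∃ u : Fin n → ℝ,
        (∑ j, u j ^ 2) = 1 ∧ r = Real.sqrt (∑ i, (A.mulVec u i) ^ 2)} := by
      refine ⟨c⁻¹ • v, ?_, rfl⟩
      have hsum : ∑ j, (c⁻¹ • v) j ^ 2 = c⁻¹ ^ 2 * ∑ j, v j ^ 2 := by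
        simp [Finset.mul_sum, mul_pow]
      rw [hsum, ← hcsq]
      field_simp
    have hbdd : BddBelow {r : ℝ | ∃ u : Fin n → ℝ,
        (∑ j, u j ^ 2) = 1 ∧ r = Real.sqrt (∑ i, (A.mulVec u i) ^ 2)} :=
      ⟨0, fun t ht => by obtain ⟨u, _, rfl⟩ := ht; exact Real.sqrt_nonneg _⟩
    have h1 : σn ≤ Real.sqrt (∑ i, (A.mulVec (c⁻¹ • v) i) ^ 2) := hσn ▸ csInf_le hbdd hmem
    have h2 : Real.sqrt (∑ i, (A.mulVec (c⁻¹ • v) i) ^ 2)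
        = c⁻¹ * Real.sqrt (∑ i, (A.mulVec v i) ^ 2) := by
      rw [Matrix.mulVec_smul]
      have hsum : ∑ i, (c⁻¹ • A.mulVec v) i ^ 2 = c⁻¹ ^ 2 * ∑ i, (A.mulVec v i) ^ 2 := by
        simp [Finset.mul_sum, mul_pow]
      rw [hsum, Real.sqrt_mul (by positivity), Real.sqrt_sq (by positivity)]
    rw [h2] at h1
    calc σn * c ≤ (c⁻¹ * Real.sqrt (∑ i, (A.mulVec v i) ^ 2)) * c :=
          mul_le_mul_of_nonneg_right h1 hcpos.le
      _ = Real.sqrt (∑ i, (A.mulVec v i) ^ 2) := by field_simp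
  -- normal equations
  have hnormal : (A'.transpose * A').mulVec x' = A'.transpose.mulVec y' := by
    have hker : LinearMap.ker (Matrix.mulVecLin A') = ⊥ := by
      have hrn : Module.finrank ℝ (LinearMap.range (Matrix.mulVecLin A')) = n := hrankA'
      have hrk := LinearMap.finrank_range_add_finrank_ker (Matrix.mulVecLin A')
      rw [hrn] at hrk
      have hfr : Module.finrank ℝ (Fin n → ℝ) = n := by simp
      rw [hfr] at hrk
      exact Submodule.finrank_eq_zero.mp (by omega)
    have hker2 : LinearMap.ker (Matrix.mulVecLin (A'.transpose * A')) = ⊥ := by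
      rw [Matrix.ker_mulVecLin_transpose_mul_self]; exact hker
    have hinj : Function.Injective ((A'.transpose * A').mulVec) := by
      have h := LinearMap.ker_eq_bot.mp hker2
      intro u v huv
      exact h (by rw [Matrix.mulVecLin_apply, Matrix.mulVecLin_apply]; exact huv)
    have hdet : IsUnit (A'.transpose * A').det :=
      (Matrix.isUnit_iff_isUnit_det _).mp (Matrix.mulVec_injective_iff_isUnit.mp hinj)
    rw [hx', Matrix.mulVec_mulVec, ← Matrix.mul_assoc, Matrix.mul_nonsing_inv _ hdet, Matrix.one_mul]
  obtain ⟨w, hw⟩ : ∃ w : Fin n → ℝ, w = x - x' := ⟨_, rfl⟩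
  obtain ⟨r, hrdef⟩ : ∃ r : Fin m → ℝ, r = A'.mulVec x - y' := ⟨_, rfl⟩
  have h2 : (A'.transpose * A').mulVec w = A'.transpose.mulVec r := by
    rw [hw, hrdef, Matrix.mulVec_sub, Matrix.mulVec_sub, hnormal, Matrix.mulVec_mulVec]
  -- the key inequality ‖A'w‖ ≤ ‖r‖
  have hAw_le : Real.sqrt (∑ i, (A'.mulVec w i) ^ 2) ≤ Real.sqrt (∑ i, r i ^ 2) := by
    have d1 : dotProduct w ((A'.transpose * A').mulVec w)
        = dotProduct (A'.mulVec w) (A'.mulVec w) := by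
      rw [← Matrix.mulVec_mulVec, Matrix.dotProduct_mulVec, Matrix.vecMul_transpose]
    have d2 : dotProduct w (A'.transpose.mulVec r)
        = dotProduct (A'.mulVec w) r := by
      rw [Matrix.dotProduct_mulVec, Matrix.vecMul_transpose]
    have e1 : (∑ i, (A'.mulVec w i) ^ 2) = dotProduct (A'.mulVec w) r := by
      calc (∑ i, (A'.mulVec w i) ^ 2) = dotProduct (A'.mulVec w) (A'.mulVec w) := by
            simp [dotProduct, sq]
        _ = dotProduct (A'.mulVec w) r := by rw [← d1, ← d2, h2]
    set a := Real.sqrt (∑ i, (A'.mulVec w i) ^ 2) with hadef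
    set b := Real.sqrt (∑ i, r i ^ 2) with hbdef
    have ha : 0 ≤ a := Real.sqrt_nonneg _
    have hb : 0 ≤ b := Real.sqrt_nonneg _
    have hsq : a ^ 2 = ∑ i, (A'.mulVec w i) ^ 2 :=
      Real.sq_sqrt (Finset.sum_nonneg fun i _ => sq_nonneg _)
    have hab : a ^ 2 ≤ a * b := by
      rw [hsq, e1]
      exact LSP.sqrt_cs _ _
    rcases eq_or_lt_of_le ha with h0 | hapos
    · rw [← h0]; exact hb
    · exact le_of_mul_le_mul_left (by rw [← pow_two]; exact hab) hapos
  -- bounds on r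
  have hr_le : Real.sqrt (∑ i, r i ^ 2) ≤
      Real.sqrt m * (ε * (Real.sqrt n * Real.sqrt (∑ j, x j ^ 2)) + ε) := by
    refine LSP.sqrt_comp_bound r _ (by positivity) fun i => ?_
    have hri : r i = (A' - A).mulVec x i + (y i - y' i) := by
      rw [hrdef, Matrix.sub_mulVec]
      simp only [Pi.sub_apply, hy]
      ring
    rw [hri]
    calc |(A' - A).mulVec x i + (y i - y' i)|
        ≤ |(A' - A).mulVec x i| + |y i - y' i| := abs_add_le _ _
      _ ≤ ε * (Real.sqrt n * Real.sqrt (∑ j, x j ^ 2)) + ε := by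
          refine add_le_add ?_ (hε2 i).le
          refine LSP.mulVec_comp_bound _ ε hεpos.le (fun i j => ?_) x i
          rw [Matrix.sub_apply, abs_sub_comm]
          exact (hε1 i j).le
  -- lower bound on ‖A'w‖
  have hlow : σn * Real.sqrt (∑ j, w j ^ 2)
      ≤ Real.sqrt (∑ i, (A'.mulVec w i) ^ 2)
        + Real.sqrt m * (ε * (Real.sqrt n * Real.sqrt (∑ j, w j ^ 2))) := by
    have hAweq : ∀ i, A.mulVec w i = A'.mulVec w i + (A - A').mulVec w i := by
      intro i
      rw [Matrix.sub_mulVec]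
      simp only [Pi.sub_apply]
      ring
    calc σn * Real.sqrt (∑ j, w j ^ 2) ≤ Real.sqrt (∑ i, (A.mulVec w i) ^ 2) := hσ_lb w
      _ = Real.sqrt (∑ i, (A'.mulVec w i + (A - A').mulVec w i) ^ 2) := by
          congr 1
          exact Finset.sum_congr rfl fun i _ => by rw [hAweq i]
      _ ≤ Real.sqrt (∑ i, (A'.mulVec w i) ^ 2)
          + Real.sqrt (∑ i, ((A - A').mulVec w i) ^ 2) := LSP.sqrt_triangle _ _
      _ ≤ Real.sqrt (∑ i, (A'.mulVec w i) ^ 2)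
          + Real.sqrt m * (ε * (Real.sqrt n * Real.sqrt (∑ j, w j ^ 2))) := by
          refine add_le_add_right ?_ _
          refine LSP.sqrt_comp_bound _ _ ?_ fun i => ?_
          · have := Real.sqrt_nonneg (∑ j, w j ^ 2)
            have := Real.sqrt_nonneg (n : ℝ)
            positivity
          · refine LSP.mulVec_comp_bound _ ε hεpos.le (fun i j => ?_) w i
            rw [Matrix.sub_apply]
            exact (hε1 i j).le
  -- final algebra
  have hNw0 : 0 ≤ Real.sqrt (∑ j, w j ^ 2) := Real.sqrt_nonneg _
  have hgoal_eq : (∑ j, (x j - x' j) ^ 2) = ∑ j, w j ^ 2 :=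
    Finset.sum_congr rfl fun j _ => by rw [hw, Pi.sub_apply]
  rw [hgoal_eq]
  have F1 : σn * Real.sqrt (∑ j, w j ^ 2) ≤ Real.sqrt m * (ε * (Real.sqrt n * Real.sqrt (∑ j, w j ^ 2)))
      + Real.sqrt m * (ε * (Real.sqrt n * Real.sqrt (∑ j, x j ^ 2)) + ε) := by
    have := le_trans hAw_le hr_le
    linarith [hlow]
  have F2 : ε * (Real.sqrt 2 * Real.sqrt m * Real.sqrt n) ≤ σn := by
    have := (le_div_iff₀ h2mn).mp hε3
    rwa [e2mn] at this
  rw [e2m, e2mn, div_mul_eq_mul_div, le_div_iff₀ (mul_pos hσpos (sub_pos.mpr hs2gt))]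
  have G1 := mul_le_mul_of_nonneg_left F1 hs2pos.le
  have G2 := mul_le_mul_of_nonneg_right F2 hNw0
  nlinarith [G1, G2]
end
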